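/- arXiv:2602.13759 — 3 statements merged into one kernel-verified Lean document; each statement's English description precedes it below -/
import Mathlib

section
/- Fix an integer n ≥ 1, a symmetric n×n real matrix C_sig, a sequence of symmetric matrices (E_k), a sequence of real numbers (σ_k²), a sequence of step sizes (η_k), and an orthogonal matrix M₀. For skew-symmetric X the Cayley map Cay(X) := (I − X/2)⁻¹(I + X/2) is well defined (I − X/2 is invertible since X is skew-symmetric). Define two sequences recursively: M_{k+1} = M_k · Cay(η_k Ω_{C_k}(M_k)) with C_k = C_sig + σ_k² I + E_k, and N_{k+1} = N_k · Cay(η_k Ω_{C_k'}(N_k)) with C_k' = C_sig + E_k and N₀ = M₀, where Ω_C(M) := [MᵀCM, diag(MᵀCM)]. Then M_k = N_k for every k; i.e., the discrete trajectory is pointwise invariant to the isotropic shift sequence (σ_k²). -/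
open Matrix

/-- The diagonal matrix whose diagonal agrees with `X`. -/
noncomputable def diagPart {n : ℕ} (X : Matrix (Fin n) (Fin n) ℝ) :
    Matrix (Fin n) (Fin n) ℝ :=
  Matrix.diagonal (fun i => X i i)

/-- The commutator generator `Ω_C(M) = [MᵀCM, diag(MᵀCM)]`. -/
noncomputable def commGen {n : ℕ} (C M : Matrix (Fin n) (Fin n) ℝ) :
    Matrix (Fin n) (Fin n) ℝ :=
  (Mᵀ * C * M) * diagPart (Mᵀ * C * M) - diagPart (Mᵀ * C * M) * (Mᵀ * C * M)

/-- The Cayley map `Cay(X) = (I − X/2)⁻¹ (I + X/2)`. -/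
noncomputable def cayley {n : ℕ} (X : Matrix (Fin n) (Fin n) ℝ) :
    Matrix (Fin n) (Fin n) ℝ :=
  (1 - (1 / 2 : ℝ) • X)⁻¹ * (1 + (1 / 2 : ℝ) • X)

/-! For orthogonal `M` we have `Mᵀ(C + σI)M = MᵀCM + σI`, whose diagonal part is shifted by the
same scalar `σI`; scalars are central, so the bracket `Ω_C(M)` does not see `σ`. For symmetric `C`
the generator `η Ω_C(M)` is skew-symmetric, so each Cayley step is orthogonal and the trajectory
stays orthogonal; by induction the two recursions take the same step at every time. -/

section Cayley

variable {ι : Type*} [Fintype ι] [DecidableEq ι]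

theorem isUnit_one_sub_of_transpose_eq_neg {Y : Matrix ι ι ℝ} (hY : Yᵀ = -Y) :
    IsUnit (1 - Y) := by
  have hfactor : (1 + Y) * (1 - Y) = 1 + Yᵀ * Y := by rw [hY]; noncomm_ring
  have hpd : (1 + Yᵀ * Y).PosDef :=
    PosDef.one.add_posSemidef (by simpa using posSemidef_conjTranspose_mul_self Y)
  exact isUnit_of_mul_isUnit_right (hfactor ▸ hpd.isUnit)

theorem one_sub_inv_mul_one_add_mem_orthogonalGroup {Y : Matrix ι ι ℝ} (hY : Yᵀ = -Y) :
    (1 - Y)⁻¹ * (1 + Y) ∈ orthogonalGroup ι ℝ := by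
  set P : Matrix ι ι ℝ := 1 - Y
  set Q : Matrix ι ι ℝ := 1 + Y
  have hPt : Pᵀ = Q := by simp [P, Q, hY, sub_eq_add_neg]
  have hQt : Qᵀ = P := by simp [P, Q, hY, sub_eq_add_neg]
  have hP : IsUnit P.det := (isUnit_iff_isUnit_det P).1 (isUnit_one_sub_of_transpose_eq_neg hY)
  have hQ : IsUnit Q.det := by rwa [← hPt, det_transpose]
  have hcomm : P * Q = Q * P := by simp only [P, Q]; noncomm_ring
  rw [mem_orthogonalGroup_iff', transpose_mul, transpose_nonsing_inv, hPt, hQt]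
  calc P * Q⁻¹ * (P⁻¹ * Q) = P * (P * Q)⁻¹ * Q := by rw [Matrix.mul_inv_rev]; noncomm_ring
    _ = P * P⁻¹ * (Q⁻¹ * Q) := by rw [hcomm, Matrix.mul_inv_rev]; noncomm_ring
    _ = 1 := by rw [mul_nonsing_inv P hP, nonsing_inv_mul Q hQ, one_mul]

end Cayley

theorem cayley_mem_orthogonalGroup {n : ℕ} {X : Matrix (Fin n) (Fin n) ℝ} (hX : Xᵀ = -X) :
    cayley X ∈ orthogonalGroup (Fin n) ℝ :=
  one_sub_inv_mul_one_add_mem_orthogonalGroup (by rw [transpose_smul, hX, smul_neg])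

theorem transpose_mul_self_eq_one_of_cayley_recursion {n : ℕ}
    {N X : ℕ → Matrix (Fin n) (Fin n) ℝ} (hX : ∀ k, (X k)ᵀ = -X k)
    (h0 : (N 0)ᵀ * N 0 = 1) (hrec : ∀ k, N (k + 1) = N k * cayley (X k)) (k : ℕ) :
    (N k)ᵀ * N k = 1 := by
  rw [← mem_orthogonalGroup_iff']
  induction k with
  | zero => rwa [mem_orthogonalGroup_iff']
  | succ k ih => rw [hrec k]; exact mul_mem ih (cayley_mem_orthogonalGroup (hX k))

theorem transpose_commutator_of_symm {ι R : Type*} [Fintype ι] [CommRing R]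
    {A B : Matrix ι ι R} (hA : Aᵀ = A) (hB : Bᵀ = B) :
    (A * B - B * A)ᵀ = -(A * B - B * A) := by
  rw [transpose_sub, transpose_mul, transpose_mul, hA, hB, neg_sub]

section CommGen

variable {n : ℕ}

theorem commGen_transpose {C : Matrix (Fin n) (Fin n) ℝ} (hC : Cᵀ = C)
    (M : Matrix (Fin n) (Fin n) ℝ) : (commGen C M)ᵀ = -commGen C M :=
  transpose_commutator_of_symm (by simp [Matrix.mul_assoc, hC]) (diagonal_transpose _)

theorem diagPart_add_smul_one (A : Matrix (Fin n) (Fin n) ℝ) (σ : ℝ) :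
    diagPart (A + σ • 1) = diagPart A + σ • 1 := by
  ext i j
  by_cases h : i = j <;> simp [diagPart, diagonal, one_apply, h]

theorem commGen_add_smul_one (C : Matrix (Fin n) (Fin n) ℝ) (σ : ℝ)
    {M : Matrix (Fin n) (Fin n) ℝ} (hM : Mᵀ * M = 1) :
    commGen (C + σ • 1) M = commGen C M := by
  have hconj : Mᵀ * (C + σ • 1) * M = Mᵀ * C * M + σ • 1 := by
    rw [mul_add, add_mul, Matrix.mul_smul, Matrix.smul_mul, mul_one, hM]
  rw [commGen, commGen, hconj, diagPart_add_smul_one]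
  simp only [add_mul, mul_add, Matrix.mul_smul, Matrix.smul_mul, mul_one, one_mul]
  abel

end CommGen

theorem trajectory_invariant_of_isotropic_shift_general {n : ℕ}
    (Csig : Matrix (Fin n) (Fin n) ℝ) (hCsig : Csigᵀ = Csig)
    (E : ℕ → Matrix (Fin n) (Fin n) ℝ) (hE : ∀ k, (E k)ᵀ = E k)
    (σsq : ℕ → ℝ) (η : ℕ → ℝ)
    (M₀ : Matrix (Fin n) (Fin n) ℝ) (hM₀ : M₀ᵀ * M₀ = 1)
    (M N : ℕ → Matrix (Fin n) (Fin n) ℝ)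
    (hM0 : M 0 = M₀) (hN0 : N 0 = M₀)
    (hMrec : ∀ k, M (k + 1) =
      M k * cayley (η k • commGen (Csig + σsq k • (1 : Matrix (Fin n) (Fin n) ℝ) + E k) (M k)))
    (hNrec : ∀ k, N (k + 1) =
      N k * cayley (η k • commGen (Csig + E k) (N k))) :
    ∀ k, M k = N k := by
  have hskew : ∀ k, (η k • commGen (Csig + E k) (N k))ᵀ = -(η k • commGen (Csig + E k) (N k)) :=
    fun k => by rw [transpose_smul, commGen_transpose (by simp [hCsig, hE k]), smul_neg]
  have hN : ∀ k, (N k)ᵀ * N k = 1 :=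
    transpose_mul_self_eq_one_of_cayley_recursion hskew (by rwa [hN0]) hNrec
  intro k
  induction k with
  | zero => rw [hM0, hN0]
  | succ k ih => rw [hMrec, hNrec, ih, add_right_comm, commGen_add_smul_one _ _ (hN k)]

/-- **Pathwise invariance to isotropic shifts**: the Cayley double-bracket trajectory
generated by `C_k = C_sig + σ_k² I + E_k` coincides pointwise with the trajectory
generated by `C_k' = C_sig + E_k`. -/
theorem trajectory_invariant_of_isotropic_shift {n : ℕ} (hn : 1 ≤ n)
    (Csig : Matrix (Fin n) (Fin n) ℝ) (hCsig : Csigᵀ = Csig)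
    (E : ℕ → Matrix (Fin n) (Fin n) ℝ) (hE : ∀ k, (E k)ᵀ = E k)
    (σsq : ℕ → ℝ) (η : ℕ → ℝ)
    (M₀ : Matrix (Fin n) (Fin n) ℝ) (hM₀ : M₀ᵀ * M₀ = 1)
    (M N : ℕ → Matrix (Fin n) (Fin n) ℝ)
    (hM0 : M 0 = M₀) (hN0 : N 0 = M₀)
    (hMrec : ∀ k, M (k + 1) =
      M k * cayley (η k • commGen (Csig + σsq k • (1 : Matrix (Fin n) (Fin n) ℝ) + E k) (M k)))
    (hNrec : ∀ k, N (k + 1) =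
      N k * cayley (η k • commGen (Csig + E k) (N k))) :
    ∀ k, M k = N k :=
  trajectory_invariant_of_isotropic_shift_general Csig hCsig E hE σsq η M₀ hM₀ M N hM0 hN0 hMrec
    hNrec
end

section
/- Let C_e and E_e be symmetric n×n real matrices and M an n×n real orthogonal matrix. Set A := Mᵀ C_e M and ℰ := Mᵀ E_e M. Then the perturbation of the commutator generator satisfies ‖[A + ℰ, diag(A + ℰ)] − [A, diag(A)]‖_F ≤ 4‖C_e‖₂ ‖E_e‖_F + 2‖E_e‖_F², a bound that involves only the trace-free perturbation and is independent of any isotropic component. -/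
open Matrix

/-- Frobenius norm of a real square matrix. -/
noncomputable def frobNorm {n : ℕ} (X : Matrix (Fin n) (Fin n) ℝ) : ℝ :=
  Real.sqrt (∑ i, ∑ j, (X i j) ^ 2)

/-- Spectral (ℓ²-operator) norm of a real square matrix. -/
noncomputable def specNorm {n : ℕ} (X : Matrix (Fin n) (Fin n) ℝ) : ℝ :=
  ‖LinearMap.toContinuousLinearMap (Matrix.toEuclideanLin X)‖

/-!
Because `diagPart` is linear, the difference of generators splits as
`⁅A, diag ℰ⁆ - ⁅diag A, ℰ⁆ + ⁅ℰ, diag ℰ⁆`. Each commutator is bounded by the mixed inequality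
`‖X Y‖_F ≤ ‖X‖₂ ‖Y‖_F` (applied row by row) and its transpose, together with
`‖diag X‖₂ ≤ ‖X‖₂`, `‖diag X‖_F ≤ ‖X‖_F`, and the fact that conjugation by an orthogonal matrix
does not increase either norm.
-/

section L2Operator

open scoped Matrix.Norms.L2Operator

variable {n : ℕ}

theorem specNorm_eq_norm (X : Matrix (Fin n) (Fin n) ℝ) : specNorm X = ‖X‖ := rfl

theorem specNorm_nonneg (X : Matrix (Fin n) (Fin n) ℝ) : 0 ≤ specNorm X := norm_nonneg X

theorem specNorm_mul_le (X Y : Matrix (Fin n) (Fin n) ℝ) :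
    specNorm (X * Y) ≤ specNorm X * specNorm Y :=
  l2_opNorm_mul X Y

theorem specNorm_transpose (X : Matrix (Fin n) (Fin n) ℝ) : specNorm Xᵀ = specNorm X := by
  rw [specNorm_eq_norm, specNorm_eq_norm, ← conjTranspose_eq_transpose_of_trivial,
    l2_opNorm_conjTranspose]

theorem norm_toLp_mulVec_le (X : Matrix (Fin n) (Fin n) ℝ) (v : Fin n → ℝ) :
    ‖WithLp.toLp 2 (X *ᵥ v)‖ ≤ specNorm X * ‖WithLp.toLp 2 v‖ :=
  l2_opNorm_mulVec X (WithLp.toLp 2 v)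

theorem specNorm_le_one_of_orthogonal {M : Matrix (Fin n) (Fin n) ℝ} (hM : Mᵀ * M = 1) :
    specNorm M ≤ 1 := by
  have hsq : specNorm M * specNorm M ≤ 1 := by
    rw [specNorm_eq_norm, ← l2_opNorm_conjTranspose_mul_self,
      conjTranspose_eq_transpose_of_trivial, hM, cstar_norm_def, map_one]
    exact ContinuousLinearMap.norm_id_le
  nlinarith [specNorm_nonneg M]

theorem specNorm_orthogonal_conj_le {M : Matrix (Fin n) (Fin n) ℝ} (hM : Mᵀ * M = 1)
    (X : Matrix (Fin n) (Fin n) ℝ) : specNorm (Mᵀ * X * M) ≤ specNorm X := by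
  have hMt : specNorm Mᵀ ≤ 1 := (specNorm_transpose M).le.trans (specNorm_le_one_of_orthogonal hM)
  calc specNorm (Mᵀ * X * M) ≤ specNorm (Mᵀ * X) * specNorm M := specNorm_mul_le _ _
    _ ≤ specNorm (Mᵀ * X) :=
        mul_le_of_le_one_right (specNorm_nonneg _) (specNorm_le_one_of_orthogonal hM)
    _ ≤ specNorm Mᵀ * specNorm X := specNorm_mul_le _ _
    _ ≤ specNorm X := mul_le_of_le_one_left (specNorm_nonneg _) hMt

theorem abs_apply_le_specNorm (X : Matrix (Fin n) (Fin n) ℝ) (i j : Fin n) :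
    |X i j| ≤ specNorm X := by
  calc |X i j| = ‖WithLp.toLp 2 (X *ᵥ (Pi.single j 1 : Fin n → ℝ)) i‖ := by simp [mulVec_single]
    _ ≤ ‖WithLp.toLp 2 (X *ᵥ (Pi.single j 1 : Fin n → ℝ))‖ := PiLp.norm_apply_le _ i
    _ ≤ specNorm X * ‖WithLp.toLp 2 (Pi.single j 1 : Fin n → ℝ)‖ := norm_toLp_mulVec_le _ _
    _ = specNorm X := by simp

theorem specNorm_diagPart_le (X : Matrix (Fin n) (Fin n) ℝ) :
    specNorm (diagPart X) ≤ specNorm X := by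
  rw [specNorm_eq_norm, diagPart, l2_opNorm_diagonal]
  exact (pi_norm_le_iff_of_nonneg (specNorm_nonneg X)).mpr fun i => abs_apply_le_specNorm X i i

end L2Operator

section Frobenius

open scoped Matrix.Norms.Frobenius

variable {n : ℕ}

theorem frobNorm_eq_norm (X : Matrix (Fin n) (Fin n) ℝ) : frobNorm X = ‖X‖ := by
  simp only [frobNorm, frobenius_norm_def, Real.sqrt_eq_rpow, Real.norm_eq_abs, Real.rpow_two,
    sq_abs]

theorem frobNorm_nonneg (X : Matrix (Fin n) (Fin n) ℝ) : 0 ≤ frobNorm X := Real.sqrt_nonneg _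

theorem frobNorm_add_le (X Y : Matrix (Fin n) (Fin n) ℝ) :
    frobNorm (X + Y) ≤ frobNorm X + frobNorm Y := by
  simpa only [frobNorm_eq_norm] using norm_add_le X Y

theorem frobNorm_sub_le (X Y : Matrix (Fin n) (Fin n) ℝ) :
    frobNorm (X - Y) ≤ frobNorm X + frobNorm Y := by
  simpa only [frobNorm_eq_norm] using norm_sub_le X Y

theorem frobNorm_transpose (X : Matrix (Fin n) (Fin n) ℝ) : frobNorm Xᵀ = frobNorm X := by
  simpa only [frobNorm_eq_norm] using frobenius_norm_transpose X

theorem frobNorm_mul_le (X Y : Matrix (Fin n) (Fin n) ℝ) :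
    frobNorm (X * Y) ≤ frobNorm X * frobNorm Y := by
  simpa only [frobNorm_eq_norm] using frobenius_norm_mul X Y

theorem frobNorm_sq_eq_sum_norm_row_sq (X : Matrix (Fin n) (Fin n) ℝ) :
    frobNorm X ^ 2 = ∑ i, ‖WithLp.toLp 2 (X i)‖ ^ 2 := by
  simp only [frobNorm, Real.sq_sqrt (by positivity : (0 : ℝ) ≤ ∑ i, ∑ j, X i j ^ 2),
    EuclideanSpace.norm_sq_eq, Real.norm_eq_abs, sq_abs]

theorem frobNorm_mul_le_frobNorm_mul_specNorm (Y X : Matrix (Fin n) (Fin n) ℝ) :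
    frobNorm (Y * X) ≤ frobNorm Y * specNorm X := by
  have hrow : ∀ i, (Y * X) i = Xᵀ *ᵥ Y i := fun i => by rw [mulVec_transpose]; rfl
  refine (sq_le_sq₀ (frobNorm_nonneg _)
    (mul_nonneg (frobNorm_nonneg _) (specNorm_nonneg _))).mp ?_
  calc frobNorm (Y * X) ^ 2 = ∑ i, ‖WithLp.toLp 2 (Xᵀ *ᵥ Y i)‖ ^ 2 := by
        simp only [frobNorm_sq_eq_sum_norm_row_sq, hrow]
    _ ≤ ∑ i, (specNorm Xᵀ * ‖WithLp.toLp 2 (Y i)‖) ^ 2 := by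
        gcongr with i
        exact norm_toLp_mulVec_le _ _
    _ = (frobNorm Y * specNorm X) ^ 2 := by
        simp only [mul_pow, ← Finset.mul_sum, frobNorm_sq_eq_sum_norm_row_sq, specNorm_transpose]
        ring

theorem frobNorm_mul_le_specNorm_mul_frobNorm (X Y : Matrix (Fin n) (Fin n) ℝ) :
    frobNorm (X * Y) ≤ specNorm X * frobNorm Y := by
  rw [← frobNorm_transpose, transpose_mul, mul_comm, ← frobNorm_transpose Y,
    ← specNorm_transpose X]
  exact frobNorm_mul_le_frobNorm_mul_specNorm _ _

theorem frobNorm_orthogonal_conj_le {M : Matrix (Fin n) (Fin n) ℝ} (hM : Mᵀ * M = 1)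
    (X : Matrix (Fin n) (Fin n) ℝ) : frobNorm (Mᵀ * X * M) ≤ frobNorm X := by
  have hMt : specNorm Mᵀ ≤ 1 := (specNorm_transpose M).le.trans (specNorm_le_one_of_orthogonal hM)
  calc frobNorm (Mᵀ * X * M) ≤ frobNorm (Mᵀ * X) * specNorm M :=
        frobNorm_mul_le_frobNorm_mul_specNorm _ _
    _ ≤ frobNorm (Mᵀ * X) :=
        mul_le_of_le_one_right (frobNorm_nonneg _) (specNorm_le_one_of_orthogonal hM)
    _ ≤ specNorm Mᵀ * frobNorm X := frobNorm_mul_le_specNorm_mul_frobNorm _ _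
    _ ≤ frobNorm X := mul_le_of_le_one_left (frobNorm_nonneg _) hMt

theorem frobNorm_diagPart_le (X : Matrix (Fin n) (Fin n) ℝ) :
    frobNorm (diagPart X) ≤ frobNorm X := by
  refine Real.sqrt_le_sqrt (Finset.sum_le_sum fun i _ => ?_)
  simp only [diagPart, diagonal_apply, ite_pow, zero_pow two_ne_zero, Finset.sum_ite_eq,
    Finset.mem_univ, if_true]
  exact Finset.single_le_sum (f := fun j => X i j ^ 2) (fun j _ => sq_nonneg _)
    (Finset.mem_univ i)

theorem frobNorm_lie_le_specNorm_mul_frobNorm (X Y : Matrix (Fin n) (Fin n) ℝ) :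
    frobNorm ⁅X, Y⁆ ≤ 2 * specNorm X * frobNorm Y := by
  calc frobNorm ⁅X, Y⁆ ≤ frobNorm (X * Y) + frobNorm (Y * X) := by
        rw [Ring.lie_def]; exact frobNorm_sub_le _ _
    _ ≤ specNorm X * frobNorm Y + frobNorm Y * specNorm X := by
        gcongr
        exacts [frobNorm_mul_le_specNorm_mul_frobNorm _ _,
          frobNorm_mul_le_frobNorm_mul_specNorm _ _]
    _ = 2 * specNorm X * frobNorm Y := by ring

theorem frobNorm_lie_le (X Y : Matrix (Fin n) (Fin n) ℝ) :
    frobNorm ⁅X, Y⁆ ≤ 2 * frobNorm X * frobNorm Y := by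
  calc frobNorm ⁅X, Y⁆ ≤ frobNorm (X * Y) + frobNorm (Y * X) := by
        rw [Ring.lie_def]; exact frobNorm_sub_le _ _
    _ ≤ frobNorm X * frobNorm Y + frobNorm Y * frobNorm X := by
        gcongr <;> exact frobNorm_mul_le _ _
    _ = 2 * frobNorm X * frobNorm Y := by ring

theorem diagPart_add (X Y : Matrix (Fin n) (Fin n) ℝ) :
    diagPart (X + Y) = diagPart X + diagPart Y := by
  simp only [diagPart, Matrix.add_apply, diagonal_add]

end Frobenius

theorem commGen_perturbation_bound_general {n : ℕ}
    (Ce Ee M : Matrix (Fin n) (Fin n) ℝ)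
    (hM : Mᵀ * M = 1) :
    frobNorm (((Mᵀ * Ce * M + Mᵀ * Ee * M) * diagPart (Mᵀ * Ce * M + Mᵀ * Ee * M)
        - diagPart (Mᵀ * Ce * M + Mᵀ * Ee * M) * (Mᵀ * Ce * M + Mᵀ * Ee * M))
      - ((Mᵀ * Ce * M) * diagPart (Mᵀ * Ce * M)
        - diagPart (Mᵀ * Ce * M) * (Mᵀ * Ce * M)))
      ≤ 4 * specNorm Ce * frobNorm Ee + 2 * frobNorm Ee ^ 2 := by
  set A := Mᵀ * Ce * M
  set E := Mᵀ * Ee * M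
  have hA : specNorm A ≤ specNorm Ce := specNorm_orthogonal_conj_le hM Ce
  have hDA : specNorm (diagPart A) ≤ specNorm Ce := (specNorm_diagPart_le A).trans hA
  have hE : frobNorm E ≤ frobNorm Ee := frobNorm_orthogonal_conj_le hM Ee
  have hDE : frobNorm (diagPart E) ≤ frobNorm Ee := (frobNorm_diagPart_le E).trans hE
  have hsplit : ((A + E) * diagPart (A + E) - diagPart (A + E) * (A + E))
      - (A * diagPart A - diagPart A * A)
      = ⁅A, diagPart E⁆ - ⁅diagPart A, E⁆ + ⁅E, diagPart E⁆ := by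
    simp only [diagPart_add, Ring.lie_def]
    noncomm_ring
  rw [hsplit]
  have hs : 0 ≤ specNorm Ce := specNorm_nonneg Ce
  have hf : 0 ≤ frobNorm Ee := frobNorm_nonneg Ee
  have h₁ : frobNorm ⁅A, diagPart E⁆ ≤ 2 * specNorm Ce * frobNorm Ee :=
    (frobNorm_lie_le_specNorm_mul_frobNorm _ _).trans (by gcongr; exact frobNorm_nonneg _)
  have h₂ : frobNorm ⁅diagPart A, E⁆ ≤ 2 * specNorm Ce * frobNorm Ee :=
    (frobNorm_lie_le_specNorm_mul_frobNorm _ _).trans (by gcongr; exact frobNorm_nonneg _)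
  have h₃ : frobNorm ⁅E, diagPart E⁆ ≤ 2 * frobNorm Ee * frobNorm Ee :=
    (frobNorm_lie_le _ _).trans (by gcongr; exact frobNorm_nonneg _)
  calc _ ≤ frobNorm ⁅A, diagPart E⁆ + frobNorm ⁅diagPart A, E⁆ + frobNorm ⁅E, diagPart E⁆ :=
        (frobNorm_add_le _ _).trans (by gcongr; exact frobNorm_sub_le _ _)
    _ ≤ 4 * specNorm Ce * frobNorm Ee + 2 * frobNorm Ee ^ 2 := by linarith

/-- **Input mapping bound**: the perturbation of the commutator generator is controlled
by the trace-free perturbation only: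
`‖[A+ℰ, diag(A+ℰ)] − [A, diag A]‖_F ≤ 4‖C_e‖₂‖E_e‖_F + 2‖E_e‖_F²`. -/
theorem commGen_perturbation_bound {n : ℕ}
    (Ce Ee M : Matrix (Fin n) (Fin n) ℝ)
    (hCe : Ceᵀ = Ce) (hEe : Eeᵀ = Ee) (hM : Mᵀ * M = 1) :
    frobNorm (((Mᵀ * Ce * M + Mᵀ * Ee * M) * diagPart (Mᵀ * Ce * M + Mᵀ * Ee * M)
        - diagPart (Mᵀ * Ce * M + Mᵀ * Ee * M) * (Mᵀ * Ce * M + Mᵀ * Ee * M))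
      - ((Mᵀ * Ce * M) * diagPart (Mᵀ * Ce * M)
        - diagPart (Mᵀ * Ce * M) * (Mᵀ * Ce * M)))
      ≤ 4 * specNorm Ce * frobNorm Ee + 2 * frobNorm Ee ^ 2 :=
  commGen_perturbation_bound_general Ce Ee M hM
end

section
/- Let C_sig be a symmetric n×n real matrix, σ² ∈ ℝ, and M an n×n real orthogonal matrix. Set A_s := Mᵀ C_sig M, O := off(A_s), and let G_E := 2·(C_sig + σ² I)·M·O be the Euclidean gradient of f at M for the observation C_sig + σ² I. Then with H := Mᵀ G_E: (i) the skew part satisfies (H − Hᵀ)/2 = [A_s, O] = −Ω(M), which is independent of σ²; and (ii) the symmetric part satisfies (H + Hᵀ)/2 = A_s O + O A_s + 2σ² O, whose σ²-dependent contribution 2σ²O lies entirely in the normal direction and scales linearly with σ². -/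
/-!
Because `MᵀM = 1`, `H = 2 A_s O + 2σ² O`. Both `A_s` and `O` are symmetric, so
`Hᵀ = 2 O A_s + 2σ² O`: the `σ²`-terms cancel in `H - Hᵀ` and double in `H + Hᵀ`.
Finally `[A_s, off A_s] = [A_s, A_s - diag A_s] = -[A_s, diag A_s]`.
-/

open Matrix

theorem isSymm_diagPart {n : ℕ} (X : Matrix (Fin n) (Fin n) ℝ) : (diagPart X).IsSymm :=
  isSymm_diagonal _

namespace Matrix

theorem IsSymm.transpose_mul_mul {m n R : Type*} [Fintype m] [CommSemiring R]
    {C : Matrix m m R} (hC : C.IsSymm) (M : Matrix m n R) : (Mᵀ * C * M).IsSymm := by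
  simp only [IsSymm, transpose_mul, transpose_transpose, hC.eq, Matrix.mul_assoc]

theorem transpose_mul_add_smul_one_mul_mul {m n R : Type*} [Fintype m] [Fintype n]
    [DecidableEq m] [DecidableEq n] [CommRing R] (C : Matrix m m R) {M : Matrix m n R}
    (hM : Mᵀ * M = 1) (s : R) (O : Matrix n n R) :
    Mᵀ * ((C + s • 1) * M * O) = Mᵀ * C * M * O + s • O := by
  simp only [Matrix.add_mul, Matrix.mul_add, Matrix.smul_mul, Matrix.mul_smul, Matrix.one_mul,
    ← Matrix.mul_assoc, hM]

section SkewSymmParts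

variable {ι : Type*} [Fintype ι] {A O : Matrix ι ι ℝ}

theorem transpose_two_smul_mul_add_smul (hA : A.IsSymm) (hO : O.IsSymm) (c : ℝ) :
    ((2 : ℝ) • (A * O) + c • O)ᵀ = (2 : ℝ) • (O * A) + c • O := by
  rw [transpose_add, transpose_smul, transpose_smul, transpose_mul, hA.eq, hO.eq]

theorem skew_part_two_smul_mul_add_smul (hA : A.IsSymm) (hO : O.IsSymm) (c : ℝ) :
    (1 / 2 : ℝ) • (((2 : ℝ) • (A * O) + c • O) - ((2 : ℝ) • (A * O) + c • O)ᵀ) =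
      A * O - O * A := by
  rw [transpose_two_smul_mul_add_smul hA hO]
  module

theorem symm_part_two_smul_mul_add_smul (hA : A.IsSymm) (hO : O.IsSymm) (c : ℝ) :
    (1 / 2 : ℝ) • (((2 : ℝ) • (A * O) + c • O) + ((2 : ℝ) • (A * O) + c • O)ᵀ) =
      A * O + O * A + c • O := by
  rw [transpose_two_smul_mul_add_smul hA hO]
  module

end SkewSymmParts

end Matrix

/-- **Euclidean gradient decomposition**: writing `A_s = Mᵀ C_sig M`, `O = off(A_s)`,
`G_E = 2(C_sig + σ²I) M O`, and `H = Mᵀ G_E`, the skew part of `H` equals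
`[A_s, O] = −Ω(M)` (σ²-free), while the symmetric part equals
`A_s O + O A_s + 2σ² O`, whose σ²-dependent contribution `2σ²O` is normal and scales
linearly with `σ²`. -/
theorem euclidean_gradient_decomposition {n : ℕ}
    (Csig M : Matrix (Fin n) (Fin n) ℝ) (hCsig : Csigᵀ = Csig) (hM : Mᵀ * M = 1)
    (σsq : ℝ) :
    -- abbreviations, fixed by hypotheses:
    ∀ As O GE H : Matrix (Fin n) (Fin n) ℝ,
      As = Mᵀ * Csig * M →
      O = As - diagPart As →
      GE = (2 : ℝ) • ((Csig + σsq • (1 : Matrix (Fin n) (Fin n) ℝ)) * M * O) →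
      H = Mᵀ * GE →
      ((1 / 2 : ℝ) • (H - Hᵀ) = As * O - O * As ∧
       As * O - O * As = -(As * diagPart As - diagPart As * As) ∧
       (1 / 2 : ℝ) • (H + Hᵀ) = As * O + O * As + (2 * σsq) • O) := by
  intro As O GE H hAs hO hGE hH
  have hAs_symm : As.IsSymm := hAs ▸ IsSymm.transpose_mul_mul hCsig M
  have hO_symm : O.IsSymm := hO ▸ hAs_symm.sub (isSymm_diagPart As)
  have hH_expand : H = (2 : ℝ) • (As * O) + (2 * σsq) • O := by
    rw [hH, hGE, Matrix.mul_smul, transpose_mul_add_smul_one_mul_mul Csig hM, ← hAs,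
      smul_add, smul_smul]
  subst hH_expand
  refine ⟨skew_part_two_smul_mul_add_smul hAs_symm hO_symm _, ?_,
    symm_part_two_smul_mul_add_smul hAs_symm hO_symm _⟩
  rw [hO]
  noncomm_ring
end
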